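/- arXiv:1002.0309 — 3 statements merged into one kernel-verified Lean document; each statement's English description precedes it below -/
import Mathlib

section
/- In any group G, the inverse of every right Engel element is a left Engel element: if for every x ∈ G there exists n with [a,_n x] = 1, then for every x ∈ G there exists m with [x,_m a⁻¹] = 1. -/
/-!
Writing `[g, y] = (g⁻¹ y⁻¹ g) · y` and using that right multiplication by `y` inside
`[·, y]` amounts to conjugation by `y`, one gets
`[g ,_{n+2} y] = [y⁻¹ ,_{n+1} g y g⁻¹]^(g y)`.
For `y = a⁻¹` the right-hand side is a conjugate of `[a ,_{n+1} g a⁻¹ g⁻¹]`,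
which vanishes for large `n` when `a` is right Engel.
-/

/-- The commutator `[a,b] = a⁻¹ b⁻¹ a b`. -/
def cmt {G : Type*} [Group G] (a b : G) : G := a⁻¹ * b⁻¹ * a * b

/-- Left-normed Engel commutator: `engel x y 0 = x`, `engel x y (n+1) = [engel x y n, y]`. -/
def engel {G : Type*} [Group G] (x y : G) : ℕ → G
  | 0 => x
  | n + 1 => cmt (engel x y n) y

section Engel

variable {G : Type*} [Group G]

lemma cmt_one_left (y : G) : cmt 1 y = 1 := by
  simp [cmt]

lemma cmt_conj (u v c : G) :
    cmt (c⁻¹ * u * c) (c⁻¹ * v * c) = c⁻¹ * cmt u v * c := by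
  simp only [cmt]
  group

lemma cmt_mul_self_right (x y : G) : cmt (x * y) y = y⁻¹ * cmt x y * y := by
  simp only [cmt]
  group

lemma engel_conj (u v c : G) (n : ℕ) :
    engel (c⁻¹ * u * c) (c⁻¹ * v * c) n = c⁻¹ * engel u v n * c := by
  induction n with
  | zero => rfl
  | succ n ih => rw [engel, ih, cmt_conj, engel]

lemma engel_conj_self (u y : G) (n : ℕ) :
    engel (y⁻¹ * u * y) y n = y⁻¹ * engel u y n * y := by
  simpa using engel_conj u y y n

lemma engel_succ' (x y : G) (n : ℕ) : engel x y (n + 1) = engel (cmt x y) y n := by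
  induction n with
  | zero => rfl
  | succ n ih => rw [engel, ih, engel]

lemma engel_succ_eq_one {x y : G} {n : ℕ} (h : engel x y n = 1) : engel x y (n + 1) = 1 := by
  rw [engel, h, cmt_one_left]

lemma engel_mul_self_succ (x y : G) (n : ℕ) :
    engel (x * y) y (n + 1) = y⁻¹ * engel x y (n + 1) * y := by
  rw [engel_succ', cmt_mul_self_right, engel_conj_self, ← engel_succ']

lemma engel_add_two (x y : G) (n : ℕ) :
    engel x y (n + 2) = (x * y)⁻¹ * engel y⁻¹ (x * y * x⁻¹) (n + 1) * (x * y) := by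
  have hconj : engel (x⁻¹ * y⁻¹ * x) y (n + 1) = x⁻¹ * engel y⁻¹ (x * y * x⁻¹) (n + 1) * x := by
    rw [← engel_conj]
    group
  rw [engel_succ', show cmt x y = x⁻¹ * y⁻¹ * x * y from rfl, engel_mul_self_succ, hconj]
  group

end Engel

theorem stmt2 {G : Type*} [Group G] (a : G)
    (h : ∀ x : G, ∃ n : ℕ, engel a x n = 1) :
    ∀ x : G, ∃ m : ℕ, engel x a⁻¹ m = 1 := by
  intro g
  obtain ⟨n, hn⟩ := h (g * a⁻¹ * g⁻¹)
  refine ⟨n + 2, ?_⟩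
  rw [engel_add_two, inv_inv, engel_succ_eq_one hn]
  group
end

section
/- Let G be a group whose commutator subgroup G' is a 2-group (every element of G' has order a power of 2). Then every element x ∈ G with x² = 1 is a left Engel element: for each g ∈ G there exists n with [g,_n x] = 1. -/
/-!
If `x² = 1` then `x` inverts `c = [g, x] = g⁻¹ (x g x)` by conjugation, so `[cᵐ, x] = c⁻ᵐ (x cᵐ x) = c⁻²ᵐ`
and by induction `[g,ₙ₊₁ x] = c^((-2)ⁿ)`. Since `c ∈ G'` has order dividing some `2ᵏ`,
`[g,ₖ₊₁ x] = 1`.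
-/

section

variable {G : Type*} [Group G]

open scoped commutatorElement in
theorem cmt_eq_commutatorElement (a b : G) : cmt a b = ⁅a⁻¹, b⁻¹⁆ := by
  simp only [cmt, commutatorElement_def, inv_inv]

theorem cmt_mem_commutator (a b : G) : cmt a b ∈ commutator G := by
  rw [cmt_eq_commutatorElement, commutator_def]
  exact Subgroup.commutator_mem_commutator (Subgroup.mem_top _) (Subgroup.mem_top _)

theorem cmt_eq_inv_mul_conj (a b : G) : cmt a b = a⁻¹ * (b⁻¹ * a * b) := by
  simp only [cmt, mul_assoc]

theorem inv_mul_cmt_mul_of_sq_eq_one {x : G} (hx : x ^ 2 = 1) (g : G) :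
    x⁻¹ * cmt g x * x = (cmt g x)⁻¹ := by
  have hxi : x⁻¹ = x := inv_eq_of_mul_eq_one_left (by rwa [← pow_two])
  simp only [cmt, hxi, mul_inv_rev, inv_inv, mul_assoc, ← pow_two, hx, mul_one]

theorem cmt_zpow_of_conj_eq_inv {c x : G} (hc : x⁻¹ * c * x = c⁻¹) (m : ℤ) :
    cmt (c ^ m) x = c ^ (-2 * m) := by
  have hconj : x⁻¹ * c ^ m * x = c ^ (-m) := by
    have h := conj_zpow (a := x⁻¹) (b := c) (i := m)
    rw [inv_inv] at h
    rw [← h, hc, inv_zpow, zpow_neg]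
  rw [cmt_eq_inv_mul_conj, hconj, ← zpow_neg, ← zpow_add]
  ring_nf

theorem engel_succ_of_sq_eq_one {x : G} (hx : x ^ 2 = 1) (g : G) (n : ℕ) :
    engel g x (n + 1) = cmt g x ^ ((-2 : ℤ) ^ n) := by
  induction n with
  | zero => simp only [engel, pow_zero, zpow_one]
  | succ n ih =>
    rw [engel, ih, cmt_zpow_of_conj_eq_inv (inv_mul_cmt_mul_of_sq_eq_one hx g), pow_succ',
      mul_comm]

theorem zpow_neg_two_pow_eq_one {y : G} {k : ℕ} (hy : y ^ 2 ^ k = 1) :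
    y ^ ((-2 : ℤ) ^ k) = 1 := by
  have hy' : y ^ ((2 : ℤ) ^ k) = 1 := by exact_mod_cast hy
  rw [neg_pow, mul_comm, zpow_mul, hy', one_zpow]

end

theorem stmt5 {G : Type*} [Group G]
    (h2 : ∀ y ∈ commutator G, ∃ k : ℕ, y ^ (2 ^ k) = 1)
    (x : G) (hx : x ^ 2 = 1) :
    ∀ g : G, ∃ n : ℕ, 1 ≤ n ∧ engel g x n = 1 := by
  intro g
  obtain ⟨k, hk⟩ := h2 (cmt g x) (cmt_mem_commutator g x)
  exact ⟨k + 1, k.succ_pos, by rw [engel_succ_of_sq_eq_one hx, zpow_neg_two_pow_eq_one hk]⟩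
end

section
/- Let G be a group, let X be an abelian normal subgroup of G containing a, and let b ∈ G be a left n-Engel element of G. Then ab is a left 2n-Engel element of G, i.e., [g,_{2n} ab] = 1 for all g ∈ G. -/
/-!
Modulo the abelian normal subgroup `X` the element `a * b` acts like `b`, so
`x := [g,_n ab]` lies in `X`. Since `a` commutes with every element of `X`, and all the
commutators `[x,_k b]` stay in `X`, we get `[x,_k ab] = [x,_k b]` for all `k`; hence
`[g,_2n ab] = [x,_n b] = 1`.
-/

section Engel

variable {G : Type*} [Group G]

lemma engel_add (x y : G) (m k : ℕ) : engel x y (m + k) = engel (engel x y m) y k := by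
  induction k with
  | zero => rfl
  | succ k ih => rw [← add_assoc, engel, engel, ih]

lemma map_engel {H : Type*} [Group H] (f : G →* H) (x y : G) (k : ℕ) :
    f (engel x y k) = engel (f x) (f y) k := by
  induction k with
  | zero => rfl
  | succ k ih => simp only [engel, cmt, map_mul, map_inv, ih]

lemma cmt_mul_left_of_commute {a y : G} (h : Commute a y) (b : G) :
    cmt y (a * b) = cmt y b := by
  calc cmt y (a * b) = y⁻¹ * b⁻¹ * (a⁻¹ * y * a) * b := by simp only [cmt]; group
    _ = cmt y b := by rw [h.inv_left.eq, inv_mul_cancel_right, cmt]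

lemma cmt_mem {N : Subgroup G} [N.Normal] {x : G} (hx : x ∈ N) (y : G) : cmt x y ∈ N := by
  have hconj : y⁻¹ * x * y ∈ N := by simpa using ‹N.Normal›.conj_mem x hx y⁻¹
  simpa only [cmt, mul_assoc] using N.mul_mem (N.inv_mem hx) hconj

lemma engel_mem {N : Subgroup G} [N.Normal] {x : G} (hx : x ∈ N) (y : G) (k : ℕ) :
    engel x y k ∈ N := by
  induction k with
  | zero => exact hx
  | succ k ih => exact cmt_mem ih y

lemma engel_mul_mem_of_engel_eq_one {N : Subgroup G} [N.Normal] {a : G} (ha : a ∈ N)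
    {g b : G} {n : ℕ} (hb : engel g b n = 1) : engel g (a * b) n ∈ N := by
  have hab : QuotientGroup.mk' N (a * b) = QuotientGroup.mk' N b := by
    simp [(QuotientGroup.eq_one_iff a).mpr ha]
  rw [← QuotientGroup.ker_mk' N, MonoidHom.mem_ker, map_engel, hab, ← map_engel, hb, map_one]

lemma engel_mul_left_of_commute {N : Subgroup G} [N.Normal] {a : G}
    (ha : ∀ v ∈ N, Commute a v) {x : G} (hx : x ∈ N) (b : G) (k : ℕ) :
    engel x (a * b) k = engel x b k := by
  induction k with
  | zero => rfl
  | succ k ih => rw [engel, engel, ih, cmt_mul_left_of_commute (ha _ (engel_mem hx b k))]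

end Engel

theorem stmt8 {G : Type*} [Group G] (X : Subgroup G) [X.Normal]
    (hX : ∀ u ∈ X, ∀ v ∈ X, u * v = v * u)
    (a : G) (ha : a ∈ X) (b : G) (n : ℕ)
    (hb : ∀ g : G, engel g b n = 1) :
    ∀ g : G, engel g (a * b) (2 * n) = 1 := by
  intro g
  have hx : engel g (a * b) n ∈ X := engel_mul_mem_of_engel_eq_one ha (hb g)
  rw [two_mul, engel_add, engel_mul_left_of_commute (fun v hv => hX a ha v hv) hx, hb]
end
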